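/- For square matrices A₁,...,A₄, B₁,...,B₄ of the same size, the commutator [A₁⊗A₂⊗A₃⊗A₄, B₁⊗B₂⊗B₃⊗B₄] equals (1/8) times the sum of all eight tensor products (C₁,B₁)⊗(C₂,B₂)⊗(C₃,B₃)⊗(C₄,B₄) where each factor is either a commutator or anticommutator and the number of commutator factors is odd (i.e., 1 or 3). -/
import Mathlib


open Matrix Kronecker

noncomputable def σ : Fin 4 → Matrix (Fin 2) (Fin 2) ℂ
  | 0 => 1
  | 1 => !![0, 1; 1, 0]
  | 2 => !![0, -Complex.I; Complex.I, 0]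
  | 3 => !![1, 0; 0, -1]

/-- rescaled Pauli matrices λⱼ = σⱼ/√2 (λ₀ = I₂/√2) -/
noncomputable def lam (j : Fin 4) : Matrix (Fin 2) (Fin 2) ℂ :=
  ((Real.sqrt 2 : ℂ))⁻¹ • σ j

/-- structure constants of commutators: (ad_{λⱼ})ₖₗ = cⱼₖˡ, via orthonormality -/
noncomputable def adL (j : Fin 4) : Matrix (Fin 4) (Fin 4) ℂ :=
  Matrix.of fun k l => ((lam j * lam k - lam k * lam j) * lam l).trace

/-- structure constants of anticommutators: (aad_{λⱼ})ₖₗ = sⱼₖˡ -/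
noncomputable def aadL (j : Fin 4) : Matrix (Fin 4) (Fin 4) ℂ :=
  Matrix.of fun k l => ((lam j * lam k + lam k * lam j) * lam l).trace

/-- ad_{Λⱼₖ} = (1/2)(ad_{λⱼ} ⊗ aad_{λₖ} + aad_{λⱼ} ⊗ ad_{λₖ}) -/
noncomputable def adLL (j k : Fin 4) : Matrix (Fin 4 × Fin 4) (Fin 4 × Fin 4) ℂ :=
  ((2 : ℂ))⁻¹ • (adL j ⊗ₖ aadL k + aadL j ⊗ₖ adL k)

private theorem sub_kron {l m p q : Type*} (A B : Matrix l m ℂ) (C : Matrix p q ℂ) :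
    (A - B) ⊗ₖ C = A ⊗ₖ C - B ⊗ₖ C := by
  ext ⟨i,j⟩ ⟨k,l⟩
  simp [Matrix.kroneckerMap, sub_mul]

private theorem kron_sub {l m p q : Type*} (A B : Matrix l m ℂ) (C : Matrix p q ℂ) :
    C ⊗ₖ (A - B) = C ⊗ₖ A - C ⊗ₖ B := by
  ext ⟨i,j⟩ ⟨k,l⟩
  simp [Matrix.kroneckerMap, mul_sub]

theorem stmt3 {n : ℕ} (A₁ A₂ A₃ A₄ B₁ B₂ B₃ B₄ : Matrix (Fin n) (Fin n) ℂ) :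
    (((A₁ ⊗ₖ A₂) ⊗ₖ A₃) ⊗ₖ A₄) * (((B₁ ⊗ₖ B₂) ⊗ₖ B₃) ⊗ₖ B₄)
      - (((B₁ ⊗ₖ B₂) ⊗ₖ B₃) ⊗ₖ B₄) * (((A₁ ⊗ₖ A₂) ⊗ₖ A₃) ⊗ₖ A₄) =
      ((8 : ℂ))⁻¹ •
        ((((A₁ * B₁ - B₁ * A₁) ⊗ₖ (A₂ * B₂ + B₂ * A₂)) ⊗ₖ (A₃ * B₃ + B₃ * A₃)) ⊗ₖ (A₄ * B₄ + B₄ * A₄)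
        + (((A₁ * B₁ + B₁ * A₁) ⊗ₖ (A₂ * B₂ - B₂ * A₂)) ⊗ₖ (A₃ * B₃ + B₃ * A₃)) ⊗ₖ (A₄ * B₄ + B₄ * A₄)
        + (((A₁ * B₁ + B₁ * A₁) ⊗ₖ (A₂ * B₂ + B₂ * A₂)) ⊗ₖ (A₃ * B₃ - B₃ * A₃)) ⊗ₖ (A₄ * B₄ + B₄ * A₄)
        + (((A₁ * B₁ + B₁ * A₁) ⊗ₖ (A₂ * B₂ + B₂ * A₂)) ⊗ₖ (A₃ * B₃ + B₃ * A₃)) ⊗ₖ (A₄ * B₄ - B₄ * A₄)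
        + (((A₁ * B₁ - B₁ * A₁) ⊗ₖ (A₂ * B₂ - B₂ * A₂)) ⊗ₖ (A₃ * B₃ - B₃ * A₃)) ⊗ₖ (A₄ * B₄ + B₄ * A₄)
        + (((A₁ * B₁ - B₁ * A₁) ⊗ₖ (A₂ * B₂ - B₂ * A₂)) ⊗ₖ (A₃ * B₃ + B₃ * A₃)) ⊗ₖ (A₄ * B₄ - B₄ * A₄)
        + (((A₁ * B₁ - B₁ * A₁) ⊗ₖ (A₂ * B₂ + B₂ * A₂)) ⊗ₖ (A₃ * B₃ - B₃ * A₃)) ⊗ₖ (A₄ * B₄ - B₄ * A₄)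
        + (((A₁ * B₁ + B₁ * A₁) ⊗ₖ (A₂ * B₂ - B₂ * A₂)) ⊗ₖ (A₃ * B₃ - B₃ * A₃)) ⊗ₖ (A₄ * B₄ - B₄ * A₄)) := by
  simp only [← Matrix.mul_kronecker_mul, kron_sub, sub_kron,
    Matrix.kronecker_add, Matrix.add_kronecker]
  module
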